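/- (Theorem 4, asymptotic behavior.) Let w : [0,∞) → W be a solution of the combinatorial Yamabe flow with w(0) = 0. Then for every boundary index i, lim_{t→∞} B_i(w(t)) = 0; consequently for every face ijk ∈ F, lim_{t→∞} θ^i_jk(w(t)) = 0, and for every edge ij of T, lim_{t→∞} l_ij(w(t)) = +∞. Geometrically, each right-angled hexagon degenerates to an ideal triangle and the initial hyperbolic surface with geodesic boundary converges to a complete hyperbolic surface with cusps. -/

import Mathlib

open Real Filter Set

/-- Inverse hyperbolic cosine. -/
noncomputable def arcosh (x : ℝ) : ℝ := Real.log (x + Real.sqrt (x ^ 2 - 1))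

/-- The length of the side of a right-angled hyperbolic hexagon opposite the side of
length `x`, where the three pairwise non-adjacent sides have lengths `x, y, z`. -/
noncomputable def theta (x y z : ℝ) : ℝ :=
  _root_.arcosh ((Real.cosh x + Real.cosh y * Real.cosh z) / (Real.sinh y * Real.sinh z))

/-- Combinatorial data of an ideally triangulated compact surface with `n` boundary
components, together with a fixed hyperbolic metric `l⁰` assigning a positive length
to each edge.  Boundary components are indexed by `Fin n`; each face is a triple of
pairwise distinct boundary indices; every boundary index occurs in at least one face. -/
structure IdealTriangulatedSurface (n : ℕ) where
  /-- The set of faces (ideal triangles), each recorded by the triple of boundary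
  components it meets. -/
  F : Finset (Fin n × Fin n × Fin n)
  /-- The three boundary indices of a face are pairwise distinct. -/
  distinct : ∀ f ∈ F, f.1 ≠ f.2.1 ∧ f.2.1 ≠ f.2.2 ∧ f.2.2 ≠ f.1
  /-- Every boundary component meets some face. -/
  covers : ∀ i : Fin n, ∃ f ∈ F, i = f.1 ∨ i = f.2.1 ∨ i = f.2.2
  /-- The fixed hyperbolic metric: the length `l⁰_ij > 0` of the edge `ij`. -/
  l0 : Fin n → Fin n → ℝ
  l0_symm : ∀ i j, l0 i j = l0 j i
  l0_pos : ∀ i j, 0 < l0 i j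

namespace IdealTriangulatedSurface

variable {n : ℕ} (S : IdealTriangulatedSurface n)

/-- `i j` is an edge of the ideal triangulation: `i ≠ j` and some face contains
both boundary indices `i` and `j`. -/
def IsEdge (i j : Fin n) : Prop :=
  i ≠ j ∧ ∃ f ∈ S.F, (i = f.1 ∨ i = f.2.1 ∨ i = f.2.2) ∧ (j = f.1 ∨ j = f.2.1 ∨ j = f.2.2)

/-- The space `W` of combinatorial conformal factors: those `w : Fin n → ℝ` with
`w_i + w_j > −log cosh (l⁰_ij / 2)` for every edge `ij`, i.e. those for which every
deformed edge length `l_ij(w)` is defined and positive. -/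
def W : Set (Fin n → ℝ) :=
  {w | ∀ i j : Fin n, S.IsEdge i j →
    -Real.log (Real.cosh (S.l0 i j / 2)) < w i + w j}

/-- The deformed edge length `l_ij(w)`, defined by
`cosh (l_ij(w)/2) = e^{w_i + w_j} cosh (l⁰_ij/2)`. -/
noncomputable def len (w : Fin n → ℝ) (i j : Fin n) : ℝ :=
  2 * _root_.arcosh (Real.exp (w i + w j) * Real.cosh (S.l0 i j / 2))

/-- `θ^i_jk(w)`: the length of the boundary arc on boundary component `i` of the
right-angled hexagon realizing the face `ijk` in the metric determined by `w`. -/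
noncomputable def thetaF (w : Fin n → ℝ) (i j k : Fin n) : ℝ :=
  theta (S.len w j k) (S.len w k i) (S.len w i j)

/-- `B_i(w)`: the length of the boundary component `i`, the sum over all faces
containing `i` of the boundary arc `θ^i` of that face. -/
noncomputable def Blen (w : Fin n → ℝ) (i : Fin n) : ℝ :=
  ∑ f ∈ S.F,
    ((if i = f.1 then S.thetaF w f.1 f.2.1 f.2.2 else 0)
      + (if i = f.2.1 then S.thetaF w f.2.1 f.2.2 f.1 else 0)
      + (if i = f.2.2 then S.thetaF w f.2.2 f.1 f.2.1 else 0))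

end IdealTriangulatedSurface

/-!
Put `h_ij := l_ij / 2`, so that `cosh h_ij = e^{w_i + w_j} cosh (l⁰_ij / 2)`. In half-lengths,
`cosh θ^i_jk = R (1 + tanh² h_jk) / (4 tanh h_ki tanh h_ij) + coth (2 h_ki) coth (2 h_ij)`,
where `R = cosh² h_jk / (cosh² h_ki cosh² h_ij)`. The key point is that
`R = e^{-4 w_i} cosh² (l⁰_jk/2) / (cosh² (l⁰_ki/2) cosh² (l⁰_ij/2))`
depends on `w` only through `w_i`. Hence `θ^i_jk ≥ arcosh (1 + R / 4)`: the boundary lengths are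
nonnegative, so each `w_i` is nondecreasing, and while `w_i ≤ M` its speed `B_i` is bounded below
by a positive constant, so `w_i` cannot stay bounded. Once every `w_i → ∞`, all `h_ij → ∞`,
`R → 0` and `tanh → 1`, so `cosh θ^i_jk → 1`.
-/

open Topology

lemma Real.tanh_pos {x : ℝ} (hx : 0 < x) : 0 < tanh x := by
  rw [tanh_eq_sinh_div_cosh]
  exact div_pos (sinh_pos_iff.2 hx) (cosh_pos x)

lemma Real.tendsto_tanh_atTop : Tendsto tanh atTop (𝓝 1) := by
  have h0 : Tendsto (fun x => exp (-x) ^ 2) atTop (𝓝 0) := by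
    simpa using tendsto_exp_neg_atTop_nhds_zero.pow 2
  have h : Tendsto (fun x => (1 - exp (-x) ^ 2) / (1 + exp (-x) ^ 2)) atTop (𝓝 1) := by
    simpa [Pi.div_def] using (tendsto_const_nhds.sub h0).div (tendsto_const_nhds.add h0)
      (by norm_num : (1 : ℝ) + 0 ≠ 0)
  refine h.congr fun x => ?_
  rw [tanh_eq, exp_neg]
  field_simp

lemma Real.continuousAt_arcosh_one : ContinuousAt Real.arcosh 1 := by
  have h : (1 : ℝ) + √(1 ^ 2 - 1) ≠ 0 := by norm_num
  exact (continuousAt_log h).comp (f := fun x : ℝ => x + √(x ^ 2 - 1)) (by fun_prop)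

noncomputable def coshSqRatio (a b c : ℝ) : ℝ := cosh a ^ 2 / (cosh b ^ 2 * cosh c ^ 2)

lemma coshSqRatio_pos (a b c : ℝ) : 0 < coshSqRatio a b c := by
  unfold coshSqRatio
  positivity

lemma theta_two_mul (a : ℝ) {b c : ℝ} (hb : b ≠ 0) (hc : c ≠ 0) :
    theta (2 * a) (2 * b) (2 * c) = Real.arcosh
      (coshSqRatio a b c * (1 + tanh a ^ 2) / (4 * (tanh b * tanh c)) +
        (tanh (2 * b) * tanh (2 * c))⁻¹) := by
  have hsb : sinh b ≠ 0 := by simpa using hb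
  have hsc : sinh c ≠ 0 := by simpa using hc
  have hsb2 : sinh (2 * b) ≠ 0 := by simpa using hb
  have hsc2 : sinh (2 * c) ≠ 0 := by simpa using hc
  -- The frozen `arcosh` is definitionally Mathlib's `Real.arcosh`.
  show Real.arcosh _ = _
  congr 1
  simp only [coshSqRatio, tanh_eq_sinh_div_cosh]
  rw [cosh_two_mul a, sinh_two_mul b, sinh_two_mul c]
  field_simp
  ring

lemma arcosh_one_add_le_theta_two_mul (a : ℝ) {b c : ℝ} (hb : 0 < b) (hc : 0 < c) :
    Real.arcosh (1 + coshSqRatio a b c / 4) ≤ theta (2 * a) (2 * b) (2 * c) := by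
  have hR := coshSqRatio_pos a b c
  have htb := Real.tanh_pos hb
  have htc := Real.tanh_pos hc
  have ht2b := Real.tanh_pos (by positivity : 0 < 2 * b)
  have ht2c := Real.tanh_pos (by positivity : 0 < 2 * c)
  have hfirst : coshSqRatio a b c / 4 ≤
      coshSqRatio a b c * (1 + tanh a ^ 2) / (4 * (tanh b * tanh c)) := by
    refine div_le_div₀ (by positivity) (le_mul_of_one_le_right hR.le (by nlinarith))
      (by positivity) ?_
    nlinarith [tanh_lt_one b, tanh_lt_one c]
  have hsecond : 1 ≤ (tanh (2 * b) * tanh (2 * c))⁻¹ :=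
    (one_le_inv₀ (by positivity)).2 (mul_le_one₀ (tanh_lt_one _).le ht2c.le (tanh_lt_one _).le)
  rw [theta_two_mul a hb.ne' hc.ne', Real.arcosh_le_arcosh (by positivity) (by linarith)]
  linarith

lemma tendsto_theta_two_mul {ι : Type*} {l : Filter ι} {a b c : ι → ℝ}
    (hb : Tendsto b l atTop) (hc : Tendsto c l atTop)
    (hR : Tendsto (fun t => coshSqRatio (a t) (b t) (c t)) l (𝓝 0)) :
    Tendsto (fun t => theta (2 * a t) (2 * b t) (2 * c t)) l (𝓝 0) := by
  have hnum :
      Tendsto (fun t => coshSqRatio (a t) (b t) (c t) * (1 + tanh (a t) ^ 2)) l (𝓝 0) := by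
    refine squeeze_zero (fun t => by have := coshSqRatio_pos (a t) (b t) (c t); positivity)
      (fun t => ?_) (by simpa using hR.const_mul 2)
    have := coshSqRatio_pos (a t) (b t) (c t)
    have := (sq_lt_one_iff_abs_lt_one _).2 (abs_tanh_lt_one (a t))
    nlinarith
  have htanh : ∀ x : ι → ℝ, Tendsto x l atTop → Tendsto (fun t => tanh (x t)) l (𝓝 1) :=
    fun x hx => Real.tendsto_tanh_atTop.comp hx
  have h2 : ∀ x : ι → ℝ, Tendsto x l atTop → Tendsto (fun t => 2 * x t) l atTop :=
    fun x hx => hx.const_mul_atTop two_pos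
  have harg : Tendsto (fun t => coshSqRatio (a t) (b t) (c t) * (1 + tanh (a t) ^ 2) /
      (4 * (tanh (b t) * tanh (c t))) + (tanh (2 * b t) * tanh (2 * c t))⁻¹) l (𝓝 1) := by
    convert (hnum.div ((htanh b hb |>.mul (htanh c hc)).const_mul 4) (by norm_num)).add
      ((htanh _ (h2 b hb) |>.mul (htanh _ (h2 c hc))).inv₀ (by norm_num)) using 2 <;> norm_num
  have hlim := Real.continuousAt_arcosh_one.tendsto.comp harg
  rw [Real.arcosh_zero] at hlim
  refine hlim.congr' ?_
  filter_upwards [hb.eventually_gt_atTop 0, hc.eventually_gt_atTop 0] with t hbt hct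
  exact (theta_two_mul (a t) hbt.ne' hct.ne').symm

lemma monotoneOn_sub_mul_of_le_deriv {f f' : ℝ → ℝ} {ε : ℝ}
    (hf : ∀ t ∈ Ici (0 : ℝ), HasDerivWithinAt f (f' t) (Ici 0) t)
    (hε : ∀ t ∈ Ici (0 : ℝ), ε ≤ f' t) :
    MonotoneOn (fun t => f t - ε * t) (Ici 0) := by
  have hg : ∀ t ∈ Ici (0 : ℝ),
      HasDerivWithinAt (fun t => f t - ε * t) (f' t - ε) (Ici 0) t :=
    fun t ht => by
      simpa [Pi.sub_def] using (hf t ht).sub ((hasDerivAt_id t).const_mul ε).hasDerivWithinAt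
  refine monotoneOn_of_hasDerivWithinAt_nonneg (f' := fun t => f' t - ε) (convex_Ici 0)
    (fun t ht => (hg t ht).continuousWithinAt) (fun t ht => ?_) (fun t ht => ?_)
  · exact (hg t (interior_subset ht)).mono interior_subset
  · exact sub_nonneg.2 (hε t (interior_subset ht))

lemma tendsto_atTop_of_hasDerivWithinAt {f f' : ℝ → ℝ}
    (hf : ∀ t ∈ Ici (0 : ℝ), HasDerivWithinAt f (f' t) (Ici 0) t)
    (hf' : ∀ t ∈ Ici (0 : ℝ), 0 ≤ f' t)
    (hf'_pos : ∀ M, ∃ ε > 0, ∀ t ∈ Ici (0 : ℝ), f t ≤ M → ε ≤ f' t) :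
    Tendsto f atTop atTop := by
  have hmono : MonotoneOn f (Ici 0) := by
    simpa using monotoneOn_sub_mul_of_le_deriv hf hf'
  rw [tendsto_atTop]
  intro M
  by_cases hreach : ∃ T ∈ Ici (0 : ℝ), M ≤ f T
  · obtain ⟨T, hT, hMT⟩ := hreach
    filter_upwards [eventually_ge_atTop T] with t ht
    exact hMT.trans (hmono hT (mem_Ici.2 (hT.out.trans ht)) ht)
  · -- `f < M` throughout, so `f' ≥ ε` throughout and `f` grows linearly past `M`.
    push Not at hreach
    obtain ⟨ε, hε, hε'⟩ := hf'_pos M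
    have hlin := monotoneOn_sub_mul_of_le_deriv hf fun t ht => hε' t ht (hreach t ht).le
    have hT : 0 ≤ (M - f 0) / ε := div_nonneg (by linarith [hreach 0 self_mem_Ici]) hε.le
    have hgrow : f 0 - ε * 0 ≤ f _ - ε * _ := hlin self_mem_Ici hT hT
    rw [mul_div_cancel₀ _ hε.ne', mul_zero, sub_zero] at hgrow
    linarith [hreach _ hT]

namespace IdealTriangulatedSurface

variable {n : ℕ} (S : IdealTriangulatedSurface n)

noncomputable def halfLen (w : Fin n → ℝ) (i j : Fin n) : ℝ :=
  Real.arcosh (exp (w i + w j) * cosh (S.l0 i j / 2))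

lemma len_eq_two_mul_halfLen (w : Fin n → ℝ) (i j : Fin n) :
    S.len w i j = 2 * S.halfLen w i j :=
  rfl

lemma thetaF_eq_theta_halfLen (w : Fin n → ℝ) (i j k : Fin n) :
    S.thetaF w i j k =
      theta (2 * S.halfLen w j k) (2 * S.halfLen w k i) (2 * S.halfLen w i j) :=
  rfl

def IsTriangle (i j k : Fin n) : Prop := S.IsEdge i j ∧ S.IsEdge j k ∧ S.IsEdge k i

variable {S}

lemma IsTriangle.rotate {i j k : Fin n} (h : S.IsTriangle i j k) : S.IsTriangle j k i :=
  ⟨h.2.1, h.2.2, h.1⟩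

lemma isTriangle_of_mem {a b c : Fin n} (hf : (a, b, c) ∈ S.F) : S.IsTriangle a b c := by
  obtain ⟨hab, hbc, hca⟩ := S.distinct _ hf
  exact ⟨⟨hab, _, hf, by simp, by simp⟩, ⟨hbc, _, hf, by simp, by simp⟩,
    ⟨hca, _, hf, by simp, by simp⟩⟩

lemma one_lt_exp_mul_cosh {w : Fin n → ℝ} (hw : w ∈ S.W) {i j : Fin n} (hij : S.IsEdge i j) :
    1 < exp (w i + w j) * cosh (S.l0 i j / 2) := by
  rw [← exp_log (cosh_pos _), ← exp_add, one_lt_exp_iff]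
  linarith [hw i j hij]

lemma cosh_halfLen {w : Fin n → ℝ} (hw : w ∈ S.W) {i j : Fin n} (hij : S.IsEdge i j) :
    cosh (S.halfLen w i j) = exp (w i + w j) * cosh (S.l0 i j / 2) :=
  Real.cosh_arcosh (one_lt_exp_mul_cosh hw hij).le

lemma halfLen_pos {w : Fin n → ℝ} (hw : w ∈ S.W) {i j : Fin n} (hij : S.IsEdge i j) :
    0 < S.halfLen w i j :=
  Real.arcosh_pos (one_lt_exp_mul_cosh hw hij)

lemma add_le_halfLen (w : Fin n → ℝ) (i j : Fin n) : w i + w j ≤ S.halfLen w i j := by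
  have hx : 0 < exp (w i + w j) * cosh (S.l0 i j / 2) := by positivity
  calc w i + w j ≤ w i + w j + log (cosh (S.l0 i j / 2)) :=
        le_add_of_nonneg_right (log_nonneg (one_le_cosh _))
    _ = log (exp (w i + w j) * cosh (S.l0 i j / 2)) := by
        rw [log_mul (exp_pos _).ne' (cosh_pos _).ne', log_exp]
    _ ≤ S.halfLen w i j := log_le_log hx (le_add_of_nonneg_right (sqrt_nonneg _))

lemma coshSqRatio_halfLen {w : Fin n → ℝ} (hw : w ∈ S.W) {i j k : Fin n}
    (h : S.IsTriangle i j k) :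
    coshSqRatio (S.halfLen w j k) (S.halfLen w k i) (S.halfLen w i j) =
      exp (-(4 * w i)) * coshSqRatio (S.l0 j k / 2) (S.l0 k i / 2) (S.l0 i j / 2) := by
  obtain ⟨hij, hjk, hki⟩ := h
  simp only [coshSqRatio, cosh_halfLen hw hij, cosh_halfLen hw hjk, cosh_halfLen hw hki]
  have hsplit : exp (w j + w k) ^ 2 =
      exp (-(4 * w i)) * (exp (w k + w i) ^ 2 * exp (w i + w j) ^ 2) := by
    simp only [← exp_nat_mul, ← exp_add]; ring_nf
  rw [mul_pow, hsplit]
  field_simp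

lemma arcosh_le_thetaF {w : Fin n → ℝ} (hw : w ∈ S.W) {i j k : Fin n}
    (h : S.IsTriangle i j k) :
    Real.arcosh (1 + exp (-(4 * w i)) *
        coshSqRatio (S.l0 j k / 2) (S.l0 k i / 2) (S.l0 i j / 2) / 4) ≤ S.thetaF w i j k := by
  rw [← coshSqRatio_halfLen hw h, thetaF_eq_theta_halfLen]
  exact arcosh_one_add_le_theta_two_mul _ (halfLen_pos hw h.2.2) (halfLen_pos hw h.1)

lemma thetaF_nonneg {w : Fin n → ℝ} (hw : w ∈ S.W) {i j k : Fin n} (h : S.IsTriangle i j k) :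
    0 ≤ S.thetaF w i j k := by
  have := coshSqRatio_pos (S.l0 j k / 2) (S.l0 k i / 2) (S.l0 i j / 2)
  exact (Real.arcosh_nonneg (le_add_of_nonneg_right (by positivity))).trans (arcosh_le_thetaF hw h)

variable (S) in
noncomputable def faceTerm (w : Fin n → ℝ) (i : Fin n) (f : Fin n × Fin n × Fin n) : ℝ :=
  (if i = f.1 then S.thetaF w f.1 f.2.1 f.2.2 else 0)
    + (if i = f.2.1 then S.thetaF w f.2.1 f.2.2 f.1 else 0)
    + (if i = f.2.2 then S.thetaF w f.2.2 f.1 f.2.1 else 0)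

lemma Blen_eq_sum_faceTerm (w : Fin n → ℝ) (i : Fin n) :
    S.Blen w i = ∑ f ∈ S.F, S.faceTerm w i f :=
  rfl

lemma faceTerm_nonneg {w : Fin n → ℝ} (hw : w ∈ S.W) (i : Fin n) {a b c : Fin n}
    (hf : (a, b, c) ∈ S.F) : 0 ≤ S.faceTerm w i (a, b, c) := by
  have h := isTriangle_of_mem hf
  have ha := thetaF_nonneg hw h
  have hb := thetaF_nonneg hw h.rotate
  have hc := thetaF_nonneg hw h.rotate.rotate
  unfold faceTerm
  positivity

lemma faceTerm_le_Blen {w : Fin n → ℝ} (hw : w ∈ S.W) (i : Fin n)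
    {f : Fin n × Fin n × Fin n} (hf : f ∈ S.F) : S.faceTerm w i f ≤ S.Blen w i :=
  Finset.single_le_sum (fun ⟨_, _, _⟩ hf' => faceTerm_nonneg hw i hf') hf

lemma Blen_nonneg {w : Fin n → ℝ} (hw : w ∈ S.W) (i : Fin n) : 0 ≤ S.Blen w i :=
  Finset.sum_nonneg fun ⟨_, _, _⟩ hf => faceTerm_nonneg hw i hf

variable (S) in
lemma exists_thetaF_le_Blen (i : Fin n) :
    ∃ j k, S.IsTriangle i j k ∧ ∀ w ∈ S.W, S.thetaF w i j k ≤ S.Blen w i := by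
  obtain ⟨⟨a, b, c⟩, hf, hi⟩ := S.covers i
  have h := isTriangle_of_mem hf
  have hle : ∀ w ∈ S.W, (i = a → S.thetaF w a b c ≤ S.Blen w i) ∧
      (i = b → S.thetaF w b c a ≤ S.Blen w i) ∧
      (i = c → S.thetaF w c a b ≤ S.Blen w i) := by
    intro w hw
    have ha := thetaF_nonneg hw h
    have hb := thetaF_nonneg hw h.rotate
    have hc := thetaF_nonneg hw h.rotate.rotate
    have hface := faceTerm_le_Blen hw i hf
    refine ⟨?_, ?_, ?_⟩ <;> rintro rfl <;> simp only [faceTerm, if_true] at hface <;>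
      split_ifs at hface <;> linarith
  rcases hi with rfl | rfl | rfl
  exacts [⟨b, c, h, fun w hw => (hle w hw).1 rfl⟩,
    ⟨c, a, h.rotate, fun w hw => (hle w hw).2.1 rfl⟩,
    ⟨a, b, h.rotate.rotate, fun w hw => (hle w hw).2.2 rfl⟩]

variable (S) in
lemma exists_pos_le_Blen (i : Fin n) (M : ℝ) :
    ∃ ε > 0, ∀ w ∈ S.W, w i ≤ M → ε ≤ S.Blen w i := by
  obtain ⟨j, k, h, hle⟩ := S.exists_thetaF_le_Blen i
  set κ := coshSqRatio (S.l0 j k / 2) (S.l0 k i / 2) (S.l0 i j / 2)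
  have hκ : 0 < κ := coshSqRatio_pos _ _ _
  refine ⟨Real.arcosh (1 + exp (-(4 * M)) * κ / 4),
    Real.arcosh_pos (lt_add_of_pos_right _ (by positivity)), fun w hw hwM => ?_⟩
  refine le_trans ?_ ((arcosh_le_thetaF hw h).trans (hle w hw))
  rw [Real.arcosh_le_arcosh (by positivity) (by positivity)]
  gcongr

lemma tendsto_halfLen_atTop {ι : Type*} {l : Filter ι} {w : ι → Fin n → ℝ} {i j : Fin n}
    (hi : Tendsto (fun t => w t i) l atTop) (hj : Tendsto (fun t => w t j) l atTop) :
    Tendsto (fun t => S.halfLen (w t) i j) l atTop :=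
  tendsto_atTop_mono (fun t => add_le_halfLen (w t) i j) (hi.atTop_add_atTop hj)

lemma tendsto_len_atTop {ι : Type*} {l : Filter ι} {w : ι → Fin n → ℝ} {i j : Fin n}
    (hi : Tendsto (fun t => w t i) l atTop) (hj : Tendsto (fun t => w t j) l atTop) :
    Tendsto (fun t => S.len (w t) i j) l atTop := by
  simpa only [len_eq_two_mul_halfLen] using (tendsto_halfLen_atTop hi hj).const_mul_atTop two_pos

lemma tendsto_thetaF_zero {ι : Type*} {l : Filter ι} {w : ι → Fin n → ℝ}
    (hW : ∀ᶠ t in l, w t ∈ S.W) (hw : ∀ i, Tendsto (fun t => w t i) l atTop)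
    {i j k : Fin n} (h : S.IsTriangle i j k) :
    Tendsto (fun t => S.thetaF (w t) i j k) l (𝓝 0) := by
  simp only [thetaF_eq_theta_halfLen]
  refine tendsto_theta_two_mul (tendsto_halfLen_atTop (hw k) (hw i))
    (tendsto_halfLen_atTop (hw i) (hw j)) ?_
  have hexp : Tendsto (fun t => exp (-(4 * w t i))) l (𝓝 0) :=
    tendsto_exp_atBot.comp (tendsto_neg_atTop_atBot.comp ((hw i).const_mul_atTop four_pos))
  refine (by simpa using hexp.mul_const _ : Tendsto (fun t => exp (-(4 * w t i)) *
    coshSqRatio (S.l0 j k / 2) (S.l0 k i / 2) (S.l0 i j / 2)) l (𝓝 0)).congr' ?_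
  filter_upwards [hW] with t ht
  exact (coshSqRatio_halfLen ht h).symm

lemma tendsto_Blen_zero {ι : Type*} {l : Filter ι} {w : ι → Fin n → ℝ}
    (hW : ∀ᶠ t in l, w t ∈ S.W) (hw : ∀ i, Tendsto (fun t => w t i) l atTop) (i : Fin n) :
    Tendsto (fun t => S.Blen (w t) i) l (𝓝 0) := by
  simp only [Blen_eq_sum_faceTerm]
  rw [← Finset.sum_const_zero (s := S.F)]
  refine tendsto_finsetSum _ fun ⟨a, b, c⟩ hf => ?_
  have h := isTriangle_of_mem hf
  have hterm : ∀ (p : Prop) [Decidable p] {j k m : Fin n}, S.IsTriangle j k m →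
      Tendsto (fun t => if p then S.thetaF (w t) j k m else 0) l (𝓝 0) := by
    intro p _ j k m hjkm
    by_cases hp : p
    · simpa [hp] using tendsto_thetaF_zero hW hw hjkm
    · simpa [hp] using tendsto_const_nhds
  simpa [faceTerm] using ((hterm _ h).add (hterm _ h.rotate)).add (hterm _ h.rotate.rotate)

end IdealTriangulatedSurface

theorem stmt_17_general {n : ℕ} (S : IdealTriangulatedSurface n)
    (w : ℝ → (Fin n → ℝ))
    (hmem : ∀ t ∈ Set.Ici (0 : ℝ), w t ∈ S.W)
    (hflow : ∀ t ∈ Set.Ici (0 : ℝ), ∀ i : Fin n,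
      HasDerivWithinAt (fun s => w s i) (S.Blen (w t) i) (Set.Ici 0) t) :
    (∀ i : Fin n,
      Filter.Tendsto (fun t => S.Blen (w t) i) Filter.atTop (nhds 0)) ∧
    (∀ f ∈ S.F,
      Filter.Tendsto (fun t => S.thetaF (w t) f.1 f.2.1 f.2.2) Filter.atTop (nhds 0) ∧
      Filter.Tendsto (fun t => S.thetaF (w t) f.2.1 f.2.2 f.1) Filter.atTop (nhds 0) ∧
      Filter.Tendsto (fun t => S.thetaF (w t) f.2.2 f.1 f.2.1) Filter.atTop (nhds 0)) ∧
    (∀ i j : Fin n, S.IsEdge i j →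
      Filter.Tendsto (fun t => S.len (w t) i j) Filter.atTop Filter.atTop) := by
  have hW : ∀ᶠ t in atTop, w t ∈ S.W := eventually_ge_atTop 0 |>.mono hmem
  have hw : ∀ i, Tendsto (fun t => w t i) atTop atTop := fun i =>
    tendsto_atTop_of_hasDerivWithinAt (fun t ht => hflow t ht i)
      (fun t ht => IdealTriangulatedSurface.Blen_nonneg (hmem t ht) i)
      fun M => (S.exists_pos_le_Blen i M).imp
        fun ε hε => ⟨hε.1, fun t ht => hε.2 (w t) (hmem t ht)⟩
  refine ⟨IdealTriangulatedSurface.tendsto_Blen_zero hW hw, fun ⟨a, b, c⟩ hf => ?_,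
    fun i j _ => IdealTriangulatedSurface.tendsto_len_atTop (hw i) (hw j)⟩
  have h := IdealTriangulatedSurface.isTriangle_of_mem hf
  exact ⟨IdealTriangulatedSurface.tendsto_thetaF_zero hW hw h,
    IdealTriangulatedSurface.tendsto_thetaF_zero hW hw h.rotate,
    IdealTriangulatedSurface.tendsto_thetaF_zero hW hw h.rotate.rotate⟩

/-- Theorem 4, asymptotic behavior: along any solution
`w : [0,∞) → W` of the combinatorial Yamabe flow with `w(0) = 0`, every boundary
length `B_i(w(t))` tends to `0` as `t → ∞`; consequently every boundary arc
`θ^i_jk(w(t))` of every face tends to `0` and every edge length `l_ij(w(t))` tends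
to `+∞` (each right-angled hexagon degenerates to an ideal triangle). -/
theorem stmt_17 {n : ℕ} (hn : 1 ≤ n) (S : IdealTriangulatedSurface n)
    (w : ℝ → (Fin n → ℝ)) (h0 : w 0 = 0)
    (hmem : ∀ t ∈ Set.Ici (0 : ℝ), w t ∈ S.W)
    (hflow : ∀ t ∈ Set.Ici (0 : ℝ), ∀ i : Fin n,
      HasDerivWithinAt (fun s => w s i) (S.Blen (w t) i) (Set.Ici 0) t) :
    (∀ i : Fin n,
      Filter.Tendsto (fun t => S.Blen (w t) i) Filter.atTop (nhds 0)) ∧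
    (∀ f ∈ S.F,
      Filter.Tendsto (fun t => S.thetaF (w t) f.1 f.2.1 f.2.2) Filter.atTop (nhds 0) ∧
      Filter.Tendsto (fun t => S.thetaF (w t) f.2.1 f.2.2 f.1) Filter.atTop (nhds 0) ∧
      Filter.Tendsto (fun t => S.thetaF (w t) f.2.2 f.1 f.2.1) Filter.atTop (nhds 0)) ∧
    (∀ i j : Fin n, S.IsEdge i j →
      Filter.Tendsto (fun t => S.len (w t) i j) Filter.atTop Filter.atTop) :=
  stmt_17_general S w hmem hflow
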